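/- Let α ∈ (0, π/2] and let A = a₀·I + a·σ, B = b₀·I + b·σ, C = c₀·I + c·σ be qubit observables whose Bloch vectors a,b,c ∈ ℝ³ are unit vectors with ⟨a,b⟩ = ⟨a,c⟩ = 0 and ⟨b,c⟩ = cos α. Then the Gram matrix T_{a,b,c} has eigenvalues 1, 1−cos α and 1+cos α, and for every qubit density matrix ρ one has (Δ_ρA)² + (Δ_ρB)² + (Δ_ρC)² ≥ 2 − cos α; moreover equality is attained by some qubit density matrix. -/

import Mathlib

open Matrix MeasureTheory Filter Set
open scoped RealInnerProductSpace Kronecker ComplexOrder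

noncomputable section

/-- ℝ³ with the Euclidean norm and inner product. -/
abbrev E3 : Type := EuclideanSpace ℝ (Fin 3)

/-- The Pauli matrices. -/
def pauli1 : Matrix (Fin 2) (Fin 2) ℂ := !![0, 1; 1, 0]
def pauli2 : Matrix (Fin 2) (Fin 2) ℂ := !![0, -Complex.I; Complex.I, 0]
def pauli3 : Matrix (Fin 2) (Fin 2) ℂ := !![1, 0; 0, -1]

/-- The qubit observable `a₀·I + a·σ`. -/
def qObs (a0 : ℝ) (a : E3) : Matrix (Fin 2) (Fin 2) ℂ :=
  (a0 : ℂ) • (1 : Matrix (Fin 2) (Fin 2) ℂ)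
    + (a 0 : ℂ) • pauli1 + (a 1 : ℂ) • pauli2 + (a 2 : ℂ) • pauli3

/-- A density matrix: positive semidefinite with trace one. -/
def IsDensityMatrix {n : Type*} [Fintype n] (ρ : Matrix n n ℂ) : Prop :=
  ρ.PosSemidef ∧ ρ.trace = 1

/-- Mean value `⟨M⟩_ρ = Tr(Mρ)` of an observable `M` in the state `ρ`. -/
def mean {n : Type*} [Fintype n] (M ρ : Matrix n n ℂ) : ℝ :=
  (Matrix.trace (M * ρ)).re

/-- Variance `(Δ_ρ M)² = Tr(M²ρ) − (Tr(Mρ))²`. -/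
def variance {n : Type*} [Fintype n] (M ρ : Matrix n n ℂ) : ℝ :=
  (Matrix.trace (M * M * ρ)).re - (mean M ρ) ^ 2

/-- Uncertainty `Δ_ρ M` (standard deviation). -/
def uncertainty {n : Type*} [Fintype n] (M ρ : Matrix n n ℂ) : ℝ :=
  Real.sqrt (variance M ρ)

/-- Gram matrix of a tuple of vectors in ℝ³. -/
def gram {m : ℕ} (v : Fin m → E3) : Matrix (Fin m) (Fin m) ℝ :=
  Matrix.of fun i j => (inner ℝ (v i) (v j) : ℝ)

lemma gram_isHermitian {m : ℕ} (v : Fin m → E3) : (gram v).IsHermitian := by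
  ext i j
  simp [_root_.gram, Matrix.conjTranspose_apply, mul_comm, real_inner_comm]

/-- Smallest eigenvalue of the Gram matrix. -/
def lamMin {m : ℕ} (v : Fin m → E3) : ℝ := ⨅ i, (gram_isHermitian v).eigenvalues i

/-- Largest eigenvalue of the Gram matrix. -/
def lamMax {m : ℕ} (v : Fin m → E3) : ℝ := ⨆ i, (gram_isHermitian v).eigenvalues i

/-!
Write `r` for the Bloch vector of `ρ`, `rᵢ = Tr(σᵢ ρ)`. A qubit observable with unit Bloch vector
`a` has variance `1 - ⟨a, r⟩²`, and a Hermitian `ρ` of trace one equals `(I + r·σ)/2`, whose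
determinant is `(1 - ‖r‖²)/4`; so `ρ ≥ 0` forces `‖r‖ ≤ 1`. The sum of the three variances is
therefore `3 - (⟨a, r⟩² + ⟨b, r⟩² + ⟨c, r⟩²)`, and on the unit ball the bracket is at most the
top eigenvalue `1 + cos α` of the Gram matrix: in the orthonormal frame `a, b, e` with
`c = cos α • b + sin α • e` this is an explicit sum of squares. Equality holds for the pure state
with Bloch vector `(b + c)/‖b + c‖`.
-/

lemma qObs_eq (a0 : ℝ) (a : E3) :
    qObs a0 a = !![(a0 + a 2 : ℂ), a 0 - Complex.I * a 1; a 0 + Complex.I * a 1, a0 - a 2] := by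
  ext i j
  fin_cases i <;> fin_cases j <;> simp [qObs, pauli1, pauli2, pauli3] <;> ring

lemma norm_sq_eq_fin_three (a : E3) : ‖a‖ ^ 2 = a 0 ^ 2 + a 1 ^ 2 + a 2 ^ 2 := by
  rw [EuclideanSpace.real_norm_sq_eq, Fin.sum_univ_three]

lemma qObs_mul_self (a0 : ℝ) (a : E3) :
    qObs a0 a * qObs a0 a = qObs (a0 ^ 2 + ‖a‖ ^ 2) ((2 * a0) • a) := by
  rw [qObs_eq, qObs_eq, norm_sq_eq_fin_three, Matrix.mul_fin_two]
  ext i j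
  fin_cases i <;> fin_cases j <;> simp <;> ring_nf <;> simp only [Complex.I_sq] <;> ring

lemma isHermitian_qObs (a0 : ℝ) (a : E3) : (qObs a0 a).IsHermitian := by
  rw [qObs_eq]
  ext i j
  fin_cases i <;> fin_cases j <;> simp [Complex.ext_iff]

lemma trace_qObs (a0 : ℝ) (a : E3) : (qObs a0 a).trace = 2 * a0 := by
  rw [qObs_eq, Matrix.trace_fin_two_of]; ring

lemma det_qObs (a0 : ℝ) (a : E3) : (qObs a0 a).det = ((a0 ^ 2 - ‖a‖ ^ 2 : ℝ) : ℂ) := by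
  rw [qObs_eq, Matrix.det_fin_two_of, norm_sq_eq_fin_three]
  push_cast
  ring_nf
  simp only [Complex.I_sq]
  ring

def blochVector (ρ : Matrix (Fin 2) (Fin 2) ℂ) : E3 := !₂[mean pauli1 ρ, mean pauli2 ρ, mean pauli3 ρ]

lemma mean_qObs (a0 : ℝ) (a : E3) {ρ : Matrix (Fin 2) (Fin 2) ℂ} (hρ : ρ.trace = 1) :
    mean (qObs a0 a) ρ = a0 + ⟪a, blochVector ρ⟫ := by
  simp only [mean, qObs, Complex.coe_smul, add_mul, Algebra.smul_mul_assoc, one_mul, trace_add,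
    trace_smul, hρ, Complex.real_smul, mul_one, Complex.add_re, Complex.ofReal_re, Complex.mul_re,
    Complex.ofReal_im, zero_mul, sub_zero, blochVector, PiLp.inner_apply, RCLike.inner_apply,
    Real.ringHom_apply, Fin.sum_univ_three, cons_val_zero, cons_val_one, cons_val]
  ring

lemma variance_qObs (a0 : ℝ) (a : E3) {ρ : Matrix (Fin 2) (Fin 2) ℂ} (hρ : ρ.trace = 1) :
    variance (qObs a0 a) ρ = ‖a‖ ^ 2 - ⟪a, blochVector ρ⟫ ^ 2 := by
  rw [variance, qObs_mul_self, ← mean, mean_qObs _ _ hρ, mean_qObs _ _ hρ, real_inner_smul_left]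
  ring

lemma blochVector_qObs (a0 : ℝ) (a : E3) : blochVector (qObs a0 a) = (2 : ℝ) • a := by
  ext i
  fin_cases i <;>
    simp [blochVector, mean, qObs_eq, pauli1, pauli2, pauli3, Matrix.trace_fin_two] <;> ring

lemma sum_variance_qObs {a b c : E3} (a0 b0 c0 : ℝ) (ha : ‖a‖ = 1) (hb : ‖b‖ = 1) (hc : ‖c‖ = 1)
    {ρ : Matrix (Fin 2) (Fin 2) ℂ} (hρ : ρ.trace = 1) :
    variance (qObs a0 a) ρ + variance (qObs b0 b) ρ + variance (qObs c0 c) ρ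
      = 3 - (⟪a, blochVector ρ⟫ ^ 2 + ⟪b, blochVector ρ⟫ ^ 2 + ⟪c, blochVector ρ⟫ ^ 2) := by
  rw [variance_qObs _ _ hρ, variance_qObs _ _ hρ, variance_qObs _ _ hρ, ha, hb, hc]
  ring

def blochState (r : E3) : Matrix (Fin 2) (Fin 2) ℂ := qObs (1 / 2) ((1 / 2 : ℝ) • r)

lemma trace_blochState (r : E3) : (blochState r).trace = 1 := by
  rw [blochState, trace_qObs]; norm_num

lemma det_blochState (r : E3) : (blochState r).det = (((1 - ‖r‖ ^ 2) / 4 : ℝ) : ℂ) := by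
  rw [blochState, det_qObs, norm_smul]
  norm_num
  ring

lemma blochVector_blochState (r : E3) : blochVector (blochState r) = r := by
  rw [blochState, blochVector_qObs, smul_smul]; norm_num

lemma isDensityMatrix_blochState {r : E3} (hr : ‖r‖ = 1) : IsDensityMatrix (blochState r) := by
  have hherm : (blochState r).IsHermitian := isHermitian_qObs _ _
  have hidem : blochState r * blochState r = blochState r := by
    rw [blochState, qObs_mul_self, norm_smul, hr, smul_smul]
    norm_num
  refine ⟨?_, trace_blochState r⟩
  rw [← hidem]
  nth_rw 1 [← hherm]
  exact Matrix.posSemidef_conjTranspose_mul_self _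

lemma Matrix.IsHermitian.eq_blochState {ρ : Matrix (Fin 2) (Fin 2) ℂ} (hρ : ρ.IsHermitian)
    (htr : ρ.trace = 1) : ρ = blochState (blochVector ρ) := by
  rw [Matrix.trace_fin_two, Complex.ext_iff] at htr
  have h00 := hρ.apply 0 0
  have h11 := hρ.apply 1 1
  have h10 := hρ.apply 1 0
  rw [Complex.ext_iff] at h00 h11 h10
  simp only [Fin.isValue, RCLike.star_def, Complex.conj_re, Complex.conj_im, true_and,
    Complex.add_re, Complex.add_im, Complex.one_re, Complex.one_im] at h00 h11 h10 htr
  ext i j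
  fin_cases i <;> fin_cases j <;>
    simp [blochState, qObs_eq, blochVector, mean, pauli1, pauli2, pauli3, Matrix.trace_fin_two,
      Matrix.vecMul, dotProduct, Fin.sum_univ_two, Complex.ext_iff] <;>
    constructor <;> linarith

lemma IsDensityMatrix.norm_blochVector_le_one {ρ : Matrix (Fin 2) (Fin 2) ℂ}
    (hρ : IsDensityMatrix ρ) : ‖blochVector ρ‖ ≤ 1 := by
  have hdet := hρ.1.det_nonneg
  rw [hρ.1.isHermitian.eq_blochState hρ.2, det_blochState, Complex.zero_le_real] at hdet
  nlinarith [norm_nonneg (blochVector ρ)]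

section Geometry

variable {F : Type*} [NormedAddCommGroup F] [InnerProductSpace ℝ F]

lemma orthonormal_gramSchmidt_of_inner_eq {a b c : F} {t : ℝ} (ha : ‖a‖ = 1) (hb : ‖b‖ = 1)
    (hc : ‖c‖ = 1) (hab : ⟪a, b⟫ = 0) (hac : ⟪a, c⟫ = 0) (hbc : ⟪b, c⟫ = t) (ht : t ^ 2 < 1) :
    Orthonormal ℝ ![a, b, (√(1 - t ^ 2))⁻¹ • (c - t • b)] := by
  set s := √(1 - t ^ 2)
  have hs : 0 < s := Real.sqrt_pos.mpr (by linarith)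
  have hbb : ⟪b, b⟫ = 1 := by rw [real_inner_self_eq_norm_sq, hb, one_pow]
  have hae : ⟪a, s⁻¹ • (c - t • b)⟫ = 0 := by
    simp only [real_inner_smul_right, inner_sub_right, hac, hab, mul_zero, sub_zero]
  have hbe : ⟪b, s⁻¹ • (c - t • b)⟫ = 0 := by
    simp only [real_inner_smul_right, inner_sub_right, hbc, hbb]; ring
  have hne : ‖c - t • b‖ = s := by
    rw [← sq_eq_sq₀ (norm_nonneg _) hs.le, norm_sub_sq_real, norm_smul, real_inner_smul_right,
      hc, hb, real_inner_comm, hbc, Real.sq_sqrt (by linarith), Real.norm_eq_abs, mul_one, sq_abs]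
    ring
  have hee : ‖s⁻¹ • (c - t • b)‖ = 1 := by
    rw [norm_smul, hne, norm_inv, Real.norm_of_nonneg hs.le, inv_mul_cancel₀ hs.ne']
  rw [orthonormal_iff_ite]
  intro i j
  fin_cases i <;> fin_cases j <;> simp [ha, hb, hab, hae, hbe, hee, real_inner_comm]

lemma sum_sq_inner_le_of_inner_eq {a b c : F} {t : ℝ} (ha : ‖a‖ = 1) (hb : ‖b‖ = 1)
    (hc : ‖c‖ = 1) (hab : ⟪a, b⟫ = 0) (hac : ⟪a, c⟫ = 0) (hbc : ⟪b, c⟫ = t) (ht0 : 0 ≤ t)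
    (ht1 : t < 1) (r : F) :
    ⟪a, r⟫ ^ 2 + ⟪b, r⟫ ^ 2 + ⟪c, r⟫ ^ 2 ≤ (1 + t) * ‖r‖ ^ 2 := by
  have ht : t ^ 2 < 1 := by nlinarith
  set s := √(1 - t ^ 2)
  have hs2 : s ^ 2 = 1 - t ^ 2 := Real.sq_sqrt (by linarith)
  have hs : s ≠ 0 := (Real.sqrt_pos.mpr (by linarith)).ne'
  set e := s⁻¹ • (c - t • b)
  have hc_eq : c = t • b + s • e := by
    rw [smul_smul, mul_inv_cancel₀ hs, one_smul, add_sub_cancel]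
  have hbessel :=
    (orthonormal_gramSchmidt_of_inner_eq ha hb hc hab hac hbc ht).sum_inner_products_le r
      (s := Finset.univ)
  simp only [Fin.sum_univ_three, Matrix.cons_val_zero, Matrix.cons_val_one, Matrix.cons_val_two,
    Matrix.head_cons, Matrix.tail_cons, Real.norm_eq_abs, sq_abs] at hbessel
  set u := ⟪a, r⟫
  set v := ⟪b, r⟫
  set z := ⟪e, r⟫
  have hgap : (1 + t) * (u ^ 2 + v ^ 2 + z ^ 2) - (u ^ 2 + v ^ 2 + (t * v + s * z) ^ 2)
      = t * u ^ 2 + t / 2 * ((s * v - (1 + t) * z) ^ 2 + ((1 - t) * v - s * z) ^ 2) := by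
    linear_combination (-(t / 2) * v ^ 2 - (1 + t / 2) * z ^ 2) * hs2
  rw [hc_eq, inner_add_left, real_inner_smul_left, real_inner_smul_left]
  nlinarith [mul_nonneg ht0 (sq_nonneg u),
    mul_nonneg ht0 (add_nonneg (sq_nonneg (s * v - (1 + t) * z)) (sq_nonneg ((1 - t) * v - s * z)))]

lemma inner_smul_inv_norm_add_sq {b c : F} {t : ℝ} (hb : ‖b‖ = 1) (hc : ‖c‖ = 1)
    (hbc : ⟪b, c⟫ = t) : ⟪b, ‖b + c‖⁻¹ • (b + c)⟫ ^ 2 = (1 + t) / 2 := by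
  have hbb : ⟪b, b⟫ = 1 := by rw [real_inner_self_eq_norm_sq, hb, one_pow]
  rw [real_inner_smul_right, mul_pow, inv_pow, norm_add_sq_real, inner_add_right, hb, hc, hbc, hbb,
    show (1 : ℝ) ^ 2 + 2 * t + 1 ^ 2 = 2 * (1 + t) by ring]
  rcases eq_or_ne (1 + t) 0 with h | h
  · simp [h]
  · field_simp

lemma sum_sq_inner_smul_inv_norm_add {a b c : F} {t : ℝ} (hb : ‖b‖ = 1) (hc : ‖c‖ = 1)
    (hab : ⟪a, b⟫ = 0) (hac : ⟪a, c⟫ = 0) (hbc : ⟪b, c⟫ = t) :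
    ⟪a, ‖b + c‖⁻¹ • (b + c)⟫ ^ 2 + ⟪b, ‖b + c‖⁻¹ • (b + c)⟫ ^ 2 + ⟪c, ‖b + c‖⁻¹ • (b + c)⟫ ^ 2
      = 1 + t := by
  have hcb : ⟪c, b⟫ = t := by rw [real_inner_comm, hbc]
  rw [real_inner_smul_right a, inner_add_right, hab, hac, inner_smul_inv_norm_add_sq hb hc hbc,
    add_comm b c, inner_smul_inv_norm_add_sq hc hb hcb]
  ring

end Geometry

section Gram

open Polynomial

lemma gram_eq_of_inner_eq {a b c : E3} {t : ℝ} (ha : ‖a‖ = 1) (hb : ‖b‖ = 1) (hc : ‖c‖ = 1)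
    (hab : ⟪a, b⟫ = 0) (hac : ⟪a, c⟫ = 0) (hbc : ⟪b, c⟫ = t) :
    gram ![a, b, c] = !![1, 0, 0; 0, 1, t; 0, t, 1] := by
  ext i j
  fin_cases i <;> fin_cases j <;>
    simp [_root_.gram, ha, hb, hc, hab, hac, hbc, real_inner_comm b, real_inner_comm a]

lemma charpoly_gram_of_inner_eq {a b c : E3} {t : ℝ} (ha : ‖a‖ = 1) (hb : ‖b‖ = 1)
    (hc : ‖c‖ = 1) (hab : ⟪a, b⟫ = 0) (hac : ⟪a, c⟫ = 0) (hbc : ⟪b, c⟫ = t) :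
    (gram ![a, b, c]).charpoly = (X - C 1) * (X - C (1 - t)) * (X - C (1 + t)) := by
  rw [gram_eq_of_inner_eq ha hb hc hab hac hbc, Matrix.charpoly, Matrix.det_fin_three]
  simp only [Fin.isValue, charmatrix_apply_eq, charmatrix_apply_ne, of_apply, cons_val',
    cons_val_zero, cons_val_one, cons_val, cons_val_fin_one, ne_eq, Fin.reduceEq, not_false_eq_true,
    map_zero, map_one, map_sub, map_add, neg_zero, mul_zero, zero_mul, sub_zero, add_zero]
  ring

lemma eigenvalues_gram_of_inner_eq {a b c : E3} {t : ℝ} (ha : ‖a‖ = 1) (hb : ‖b‖ = 1)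
    (hc : ‖c‖ = 1) (hab : ⟪a, b⟫ = 0) (hac : ⟪a, c⟫ = 0) (hbc : ⟪b, c⟫ = t) :
    Finset.univ.val.map (gram_isHermitian ![a, b, c]).eigenvalues = {1, 1 - t, 1 + t} := by
  have h2 := mul_ne_zero (X_sub_C_ne_zero 1) (X_sub_C_ne_zero (1 - t))
  calc _ = (gram ![a, b, c]).charpoly.roots := by
        simpa using (gram_isHermitian ![a, b, c]).roots_charpoly_eq_eigenvalues.symm
    _ = {1, 1 - t, 1 + t} := by
        rw [charpoly_gram_of_inner_eq ha hb hc hab hac hbc,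
          roots_mul (mul_ne_zero h2 (X_sub_C_ne_zero _)), roots_mul h2, roots_X_sub_C,
          roots_X_sub_C, roots_X_sub_C]
        rfl

end Gram

lemma cos_mem_Ico_of_mem_Ioc {α : ℝ} (hα : α ∈ Set.Ioc 0 (Real.pi / 2)) :
    Real.cos α ∈ Set.Ico 0 1 := by
  refine ⟨Real.cos_nonneg_of_mem_Icc ⟨by linarith [Real.pi_pos, hα.1], hα.2⟩, ?_⟩
  simpa using Real.cos_lt_cos_of_nonneg_of_le_pi le_rfl (by linarith [Real.pi_pos, hα.2]) hα.1

/-- unit Bloch vectors with a ⊥ b, a ⊥ c and angle α between b and c: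
spectrum of the Gram matrix and the tight uncertainty bound 2 − cos α. -/
theorem three_observables_two_orthogonal
    (α a0 b0 c0 : ℝ) (hα : α ∈ Set.Ioc 0 (Real.pi / 2)) (a b c : E3)
    (ha : ‖a‖ = 1) (hb : ‖b‖ = 1) (hc : ‖c‖ = 1)
    (hab : (inner ℝ a b : ℝ) = 0)
    (hac : (inner ℝ a c : ℝ) = 0)
    (hbc : (inner ℝ b c : ℝ) = Real.cos α) :
    (Finset.univ.val.map (gram_isHermitian ![a, b, c]).eigenvalues
        = ({1, 1 - Real.cos α, 1 + Real.cos α} : Multiset ℝ)) ∧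
    (∀ ρ : Matrix (Fin 2) (Fin 2) ℂ, IsDensityMatrix ρ →
        variance (qObs a0 a) ρ + variance (qObs b0 b) ρ + variance (qObs c0 c) ρ
          ≥ 2 - Real.cos α) ∧
    (∃ ρ : Matrix (Fin 2) (Fin 2) ℂ, IsDensityMatrix ρ ∧
        variance (qObs a0 a) ρ + variance (qObs b0 b) ρ + variance (qObs c0 c) ρ
          = 2 - Real.cos α) := by
  obtain ⟨ht0, ht1⟩ := cos_mem_Ico_of_mem_Ioc hα
  refine ⟨eigenvalues_gram_of_inner_eq ha hb hc hab hac hbc, fun ρ hρ => ?_, ?_⟩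
  · have hr : ‖blochVector ρ‖ ^ 2 ≤ 1 :=
      pow_le_one₀ (norm_nonneg _) hρ.norm_blochVector_le_one
    have := sum_sq_inner_le_of_inner_eq ha hb hc hab hac hbc ht0 ht1 (blochVector ρ)
    rw [sum_variance_qObs a0 b0 c0 ha hb hc hρ.2]
    nlinarith
  · have hbc0 : b + c ≠ 0 := by
      intro h
      have := congrArg (⟪b, ·⟫) h
      simp only [inner_add_right, hbc, real_inner_self_eq_norm_sq, hb, inner_zero_right] at this
      linarith
    refine ⟨blochState (‖b + c‖⁻¹ • (b + c)),
      isDensityMatrix_blochState (norm_smul_inv_norm hbc0), ?_⟩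
    rw [sum_variance_qObs a0 b0 c0 ha hb hc (trace_blochState _), blochVector_blochState,
      sum_sq_inner_smul_inv_norm_add hb hc hab hac hbc]
    ring

end
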